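/- arXiv:1808.09641 — 4 statements merged into one kernel-verified Lean document; each statement's English description precedes it below -/
import Mathlib

section
/- Let γ : I → ℝ^{2,1} be a smooth null curve parametrized by pseudo-arclength with γ′ nowhere zero, and set σ := γ′ and e := γ″. Then: (a) there exists a unique smooth map n : I → ℝ^{2,1} with ⟨n, n⟩ = 0, ⟨n, σ⟩ = −2, and ⟨n, e⟩ = 0 on I; (b) setting κ(s) := −⟨n′(s), e(s)⟩, the Frenet–Serret type equations σ′ = e, e′ = −(κ/2)σ + (1/2)n, and n′ = −κ·e hold on I; (c) κ(s) = ⟨γ‴(s), γ‴(s)⟩ for all s ∈ I. -/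
noncomputable section

/-- Minkowski inner product on ℝ^{2,1} = ℝ³, coordinates (ξ₁, ξ₂, ξ₀). -/
def mink (a b : ℝ × ℝ × ℝ) : ℝ := a.1 * b.1 + a.2.1 * b.2.1 - a.2.2 * b.2.2

def mconj (a : ℝ × ℝ × ℝ) : ℝ × ℝ × ℝ := (a.1, a.2.1, -a.2.2)
def NN (σ e : ℝ × ℝ × ℝ) : ℝ × ℝ × ℝ :=
  (-(mink (mconj σ) e)^2 / (4 * σ.2.2^4)) • σ + (-1 / σ.2.2^2) • mconj σ
    + (mink (mconj σ) e / σ.2.2^2) • e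

lemma mink_comm (a b : ℝ × ℝ × ℝ) : mink a b = mink b a := by simp [mink]; ring
lemma mink_add_left (a b c : ℝ × ℝ × ℝ) : mink (a + b) c = mink a c + mink b c := by
  simp [mink, Prod.fst_add, Prod.snd_add]; ring
lemma mink_sub_left (a b c : ℝ × ℝ × ℝ) : mink (a - b) c = mink a c - mink b c := by
  simp [mink, Prod.fst_sub, Prod.snd_sub]; ring
lemma mink_smul_left (r : ℝ) (a c : ℝ × ℝ × ℝ) : mink (r • a) c = r * mink a c := by
  simp [mink, Prod.smul_fst, Prod.smul_snd, smul_eq_mul]; ring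
lemma mink_add_right (a b c : ℝ × ℝ × ℝ) : mink c (a + b) = mink c a + mink c b := by
  simp [mink, Prod.fst_add, Prod.snd_add]; ring
lemma mink_smul_right (r : ℝ) (a c : ℝ × ℝ × ℝ) : mink c (r • a) = r * mink c a := by
  simp [mink, Prod.smul_fst, Prod.smul_snd, smul_eq_mul]; ring

lemma mink_NN_left (σ e x : ℝ × ℝ × ℝ) :
    mink (NN σ e) x = (-(mink (mconj σ) e)^2 / (4 * σ.2.2^4)) * mink σ x
      + (-1 / σ.2.2^2) * mink (mconj σ) x + (mink (mconj σ) e / σ.2.2^2) * mink e x := by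
  simp [NN, mink_add_left, mink_smul_left]

lemma sigma0_ne (σ : ℝ × ℝ × ℝ) (hσ : σ ≠ 0) (h0 : mink σ σ = 0) : σ.2.2 ≠ 0 := by
  intro h
  apply hσ
  simp [mink, h] at h0
  have h1 : σ.1 = 0 := by nlinarith [sq_nonneg σ.1, sq_nonneg σ.2.1]
  have h2 : σ.2.1 = 0 := by nlinarith [sq_nonneg σ.1, sq_nonneg σ.2.1]
  exact Prod.ext h1 (Prod.ext h2 h)

lemma mink_zero_of (σ e f : ℝ × ℝ × ℝ) (hσ : σ ≠ 0) (h0 : mink σ σ = 0)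
    (h1 : mink e e = 1) (h2 : mink σ e = 0)
    (z1 : mink f σ = 0) (z2 : mink f (mconj σ) = 0) (z3 : mink f e = 0) : f = 0 := by
  have hq := sigma0_ne σ hσ h0
  obtain ⟨s1, s2, s0⟩ := σ
  obtain ⟨e1, e2, e0⟩ := e
  obtain ⟨f1, f2, f0⟩ := f
  simp [mink, mconj] at *
  have hf0 : f0 = 0 := by
    have : f0 * s0 = 0 := by linarith
    rcases mul_eq_zero.1 this with h | h
    · exact h
    · exact absurd h hq
  subst hf0
  have e1' : f1 * s1 + f2 * s2 = 0 := by linarith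
  have e2' : f1 * e1 + f2 * e2 = 0 := by linarith
  have hD : (s1 * e2 - s2 * e1)^2 = s0^2 := by
    linear_combination (e1^2+e2^2)*h0 + s0^2*h1 - (s1*e1+s2*e2+s0*e0)*h2
  have hDne : s1 * e2 - s2 * e1 ≠ 0 := by
    intro h; rw [h] at hD
    have : s0^2 = 0 := by rw [← hD]; ring
    exact hq (pow_eq_zero_iff two_ne_zero |>.1 this)
  have hf1 : f1 = 0 := by
    have : f1 * (s1 * e2 - s2 * e1) = 0 := by linear_combination e2 * e1' - s2 * e2'
    rcases mul_eq_zero.1 this with h | h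
    · exact h
    · exact absurd h hDne
  have hf2 : f2 = 0 := by
    have : f2 * (s1 * e2 - s2 * e1) = 0 := by linear_combination -e1 * e1' + s1 * e2'
    rcases mul_eq_zero.1 this with h | h
    · exact h
    · exact absurd h hDne
  simp [hf1, hf2]

lemma gram_conj_conj (σ : ℝ × ℝ × ℝ) (h0 : mink σ σ = 0) : mink (mconj σ) (mconj σ) = 0 := by
  have : mink (mconj σ) (mconj σ) = mink σ σ := by simp [mink, mconj]
  rw [this, h0]

lemma gram_conj_sigma (σ : ℝ × ℝ × ℝ) (h0 : mink σ σ = 0) :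
    mink (mconj σ) σ = 2 * σ.2.2^2 := by
  have h0' : σ.1 * σ.1 + σ.2.1 * σ.2.1 - σ.2.2 * σ.2.2 = 0 := h0
  simp [mink, mconj]; linear_combination h0'

lemma NN_sigma (σ e : ℝ × ℝ × ℝ) (hσ : σ ≠ 0) (h0 : mink σ σ = 0) (h2 : mink σ e = 0) :
    mink (NN σ e) σ = -2 := by
  have hq := sigma0_ne σ hσ h0
  rw [mink_NN_left, h0, gram_conj_sigma σ h0, mink_comm e σ, h2]
  field_simp
  ring

lemma NN_e (σ e : ℝ × ℝ × ℝ) (hσ : σ ≠ 0) (h0 : mink σ σ = 0) (h1 : mink e e = 1)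
    (h2 : mink σ e = 0) : mink (NN σ e) e = 0 := by
  have hq := sigma0_ne σ hσ h0
  rw [mink_NN_left, h2, h1]
  field_simp
  ring

lemma NN_conj (σ e : ℝ × ℝ × ℝ) (h0 : mink σ σ = 0) :
    mink (NN σ e) (mconj σ) = (-(mink (mconj σ) e)^2 / (4 * σ.2.2^4)) * (2 * σ.2.2^2)
      + (mink (mconj σ) e / σ.2.2^2) * mink e (mconj σ) := by
  rw [mink_NN_left, mink_comm σ (mconj σ), gram_conj_sigma σ h0, gram_conj_conj σ h0]
  ring

lemma NN_null (σ e : ℝ × ℝ × ℝ) (hσ : σ ≠ 0) (h0 : mink σ σ = 0) (h1 : mink e e = 1)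
    (h2 : mink σ e = 0) : mink (NN σ e) (NN σ e) = 0 := by
  have hq := sigma0_ne σ hσ h0
  rw [mink_NN_left]
  rw [mink_comm σ (NN σ e), NN_sigma σ e hσ h0 h2]
  rw [mink_comm (mconj σ) (NN σ e), NN_conj σ e h0]
  rw [mink_comm e (NN σ e), NN_e σ e hσ h0 h1 h2]
  rw [mink_comm e (mconj σ)]
  field_simp
  ring

lemma mink_decomp (σ e : ℝ × ℝ × ℝ) (hσ : σ ≠ 0) (h0 : mink σ σ = 0) (h1 : mink e e = 1)
    (h2 : mink σ e = 0) (f : ℝ × ℝ × ℝ) :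
    f = (-(mink f (NN σ e))/2) • σ + (-(mink f σ)/2) • (NN σ e) + (mink f e) • e := by
  have hq := sigma0_ne σ hσ h0
  rw [← sub_eq_zero]
  set g := f - ((-(mink f (NN σ e))/2) • σ + (-(mink f σ)/2) • (NN σ e) + (mink f e) • e)
    with hg
  have expand : ∀ x, mink g x = mink f x - ((-(mink f (NN σ e))/2) * mink σ x
      + (-(mink f σ)/2) * mink (NN σ e) x + (mink f e) * mink e x) := by
    intro x
    rw [hg, mink_sub_left, mink_add_left, mink_add_left, mink_smul_left, mink_smul_left,
      mink_smul_left]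
  have z1 : mink g σ = 0 := by
    rw [expand, h0, NN_sigma σ e hσ h0 h2, mink_comm e σ, h2]; ring
  have z3 : mink g e = 0 := by
    rw [expand, h2, NN_e σ e hσ h0 h1 h2, h1]; ring
  have z2 : mink g (mconj σ) = 0 := by
    rw [expand, mink_comm σ (mconj σ), gram_conj_sigma σ h0, NN_conj σ e h0,
      mink_comm e (mconj σ)]
    rw [mink_comm f (NN σ e), mink_NN_left, mink_comm σ f, mink_comm (mconj σ) f,
      mink_comm e f]
    field_simp
    ring
  exact mink_zero_of σ e g hσ h0 h1 h2 z1 z2 z3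
lemma hasDerivAt_mink {u v : ℝ → ℝ × ℝ × ℝ} {u' v' : ℝ × ℝ × ℝ} {s : ℝ}
    (hu : HasDerivAt u u' s) (hv : HasDerivAt v v' s) :
    HasDerivAt (fun t => mink (u t) (v t)) (mink u' (v s) + mink (u s) v') s := by
  have u1 : HasDerivAt (fun t => (u t).1) u'.1 s := by
    exact (ContinuousLinearMap.fst ℝ ℝ (ℝ × ℝ)).hasFDerivAt.comp_hasDerivAt s hu
  have u2 : HasDerivAt (fun t => (u t).2.1) u'.2.1 s := by
    exact ((ContinuousLinearMap.fst ℝ ℝ ℝ).comp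
      (ContinuousLinearMap.snd ℝ ℝ (ℝ × ℝ))).hasFDerivAt.comp_hasDerivAt s hu
  have u3 : HasDerivAt (fun t => (u t).2.2) u'.2.2 s := by
    exact ((ContinuousLinearMap.snd ℝ ℝ ℝ).comp
      (ContinuousLinearMap.snd ℝ ℝ (ℝ × ℝ))).hasFDerivAt.comp_hasDerivAt s hu
  have v1 : HasDerivAt (fun t => (v t).1) v'.1 s := by
    exact (ContinuousLinearMap.fst ℝ ℝ (ℝ × ℝ)).hasFDerivAt.comp_hasDerivAt s hv
  have v2 : HasDerivAt (fun t => (v t).2.1) v'.2.1 s := by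
    exact ((ContinuousLinearMap.fst ℝ ℝ ℝ).comp
      (ContinuousLinearMap.snd ℝ ℝ (ℝ × ℝ))).hasFDerivAt.comp_hasDerivAt s hv
  have v3 : HasDerivAt (fun t => (v t).2.2) v'.2.2 s := by
    exact ((ContinuousLinearMap.snd ℝ ℝ ℝ).comp
      (ContinuousLinearMap.snd ℝ ℝ (ℝ × ℝ))).hasFDerivAt.comp_hasDerivAt s hv
  have h := ((u1.mul v1).add (u2.mul v2)).sub (u3.mul v3)
  exact h.congr_deriv (by simp [mink]; ring)

lemma deriv_loc_const {φ : ℝ → ℝ} {c : ℝ} {I : Set ℝ} (hI : IsOpen I) {s : ℝ}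
    (hs : s ∈ I) (hconst : ∀ t ∈ I, φ t = c) {d : ℝ} (hφ : HasDerivAt φ d s) : d = 0 := by
  have h1 : φ =ᶠ[nhds s] (fun _ => c) := Filter.eventually_of_mem (hI.mem_nhds hs) hconst
  exact hφ.unique ((hasDerivAt_const s c).congr_of_eventuallyEq h1)

/-- Frenet–Serret type formula for a non-degenerate null curve parametrized by
pseudo-arclength: there is a unique null vector field n with ⟨n, σ⟩ = −2, ⟨n, e⟩ = 0,
(where σ = γ′, e = γ″), the Frenet–Serret equations hold with lightlike curvature
κ = −⟨n′, e⟩, and κ = ⟨γ‴, γ‴⟩. -/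
theorem null_curve_frenet_serret
    (I : Set ℝ) (hI : IsOpen I) (hIc : I.OrdConnected)
    (γ : ℝ → ℝ × ℝ × ℝ) (hγ : ContDiffOn ℝ (⊤ : ℕ∞) γ I)
    (hreg : ∀ s ∈ I, deriv γ s ≠ 0)
    (hnull : ∀ s ∈ I, mink (deriv γ s) (deriv γ s) = 0)
    (hpa : ∀ s ∈ I, mink (deriv (deriv γ) s) (deriv (deriv γ) s) = 1) :
    ∃ n : ℝ → ℝ × ℝ × ℝ,
      -- (a) existence of a smooth null vector field n with the stated pairings
      ContDiffOn ℝ (⊤ : ℕ∞) n I ∧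
      (∀ s ∈ I, mink (n s) (n s) = 0 ∧ mink (n s) (deriv γ s) = -2 ∧
        mink (n s) (deriv (deriv γ) s) = 0) ∧
      -- (a) uniqueness
      (∀ n' : ℝ → ℝ × ℝ × ℝ,
        (∀ s ∈ I, mink (n' s) (n' s) = 0 ∧ mink (n' s) (deriv γ s) = -2 ∧
          mink (n' s) (deriv (deriv γ) s) = 0) →
        ∀ s ∈ I, n' s = n s) ∧
      -- (b) Frenet–Serret type equations with κ(s) := −⟨n′(s), e(s)⟩
      (∀ s ∈ I,
        deriv (fun t => deriv γ t) s = deriv (deriv γ) s ∧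
        deriv (deriv (deriv γ)) s
          = -((-(mink (deriv n s) (deriv (deriv γ) s))) / 2) • deriv γ s
            + (2⁻¹ : ℝ) • n s ∧
        deriv n s = -(-(mink (deriv n s) (deriv (deriv γ) s))) • deriv (deriv γ) s) ∧
      -- (c) κ(s) = ⟨γ‴(s), γ‴(s)⟩
      (∀ s ∈ I, -(mink (deriv n s) (deriv (deriv γ) s))
        = mink (deriv (deriv (deriv γ)) s) (deriv (deriv (deriv γ)) s)) := by
  -- smoothness of the derivatives of γ
  have hσC : ContDiffOn ℝ (⊤ : ℕ∞) (deriv γ) I := hγ.deriv_of_isOpen hI (by simp)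
  have heC : ContDiffOn ℝ (⊤ : ℕ∞) (deriv (deriv γ)) I := hσC.deriv_of_isOpen hI (by simp)
  have hfC : ContDiffOn ℝ (⊤ : ℕ∞) (deriv (deriv (deriv γ))) I := heC.deriv_of_isOpen hI (by simp)
  have hq : ∀ s ∈ I, (deriv γ s).2.2 ≠ 0 := fun s hs =>
    sigma0_ne _ (hreg s hs) (hnull s hs)
  -- the normal field
  set n : ℝ → ℝ × ℝ × ℝ := fun t => NN (deriv γ t) (deriv (deriv γ) t) with hn
  -- smoothness of n
  have hnC : ContDiffOn ℝ (⊤ : ℕ∞) n I := by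
    have hσ1 : ContDiffOn ℝ (⊤ : ℕ∞) (fun t => (deriv γ t).1) I := contDiff_fst.comp_contDiffOn hσC
    have hσ2 : ContDiffOn ℝ (⊤ : ℕ∞) (fun t => (deriv γ t).2.1) I :=
      (contDiff_fst.comp contDiff_snd).comp_contDiffOn hσC
    have hσ0 : ContDiffOn ℝ (⊤ : ℕ∞) (fun t => (deriv γ t).2.2) I :=
      (contDiff_snd.comp contDiff_snd).comp_contDiffOn hσC
    have he1 : ContDiffOn ℝ (⊤ : ℕ∞) (fun t => (deriv (deriv γ) t).1) I :=
      contDiff_fst.comp_contDiffOn heC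
    have he2 : ContDiffOn ℝ (⊤ : ℕ∞) (fun t => (deriv (deriv γ) t).2.1) I :=
      (contDiff_fst.comp contDiff_snd).comp_contDiffOn heC
    have he0 : ContDiffOn ℝ (⊤ : ℕ∞) (fun t => (deriv (deriv γ) t).2.2) I :=
      (contDiff_snd.comp contDiff_snd).comp_contDiffOn heC
    have hconj : ContDiffOn ℝ (⊤ : ℕ∞) (fun t => mconj (deriv γ t)) I := hσ1.prodMk (hσ2.prodMk hσ0.neg)
    have hp : ContDiffOn ℝ (⊤ : ℕ∞) (fun t => mink (mconj (deriv γ t)) (deriv (deriv γ) t)) I :=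
      ((hσ1.mul he1).add (hσ2.mul he2)).sub (hσ0.neg.mul he0)
    have hden : ContDiffOn ℝ (⊤ : ℕ∞) (fun t => 4 * (deriv γ t).2.2^4) I :=
      contDiffOn_const.mul (hσ0.pow 4)
    have hdenne : ∀ t ∈ I, 4 * (deriv γ t).2.2^4 ≠ 0 := by
      intro t ht; have := hq t ht; positivity
    have hden2 : ContDiffOn ℝ (⊤ : ℕ∞) (fun t => (deriv γ t).2.2^2) I := hσ0.pow 2
    have hden2ne : ∀ t ∈ I, (deriv γ t).2.2^2 ≠ 0 := fun t ht => pow_ne_zero 2 (hq t ht)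
    have ha : ContDiffOn ℝ (⊤ : ℕ∞)
        (fun t => -(mink (mconj (deriv γ t)) (deriv (deriv γ) t))^2 / (4 * (deriv γ t).2.2^4))
        I := ((hp.pow 2).neg).div hden hdenne
    have hb : ContDiffOn ℝ (⊤ : ℕ∞) (fun t => (-1 : ℝ) / (deriv γ t).2.2^2) I :=
      contDiffOn_const.div hden2 hden2ne
    have hc : ContDiffOn ℝ (⊤ : ℕ∞)
        (fun t => mink (mconj (deriv γ t)) (deriv (deriv γ) t) / (deriv γ t).2.2^2) I :=
      hp.div hden2 hden2ne
    exact ((ha.smul hσC).add (hb.smul hconj)).add (hc.smul heC)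
  -- HasDerivAt facts
  have hd : ∀ (f : ℝ → ℝ × ℝ × ℝ), ContDiffOn ℝ (⊤ : ℕ∞) f I → ∀ s ∈ I,
      HasDerivAt f (deriv f s) s := fun f hf s hs =>
    ((hf.differentiableOn (by simp)).differentiableAt (hI.mem_nhds hs)).hasDerivAt
  have Hσ : ∀ s ∈ I, HasDerivAt (deriv γ) (deriv (deriv γ) s) s := hd _ hσC
  have He : ∀ s ∈ I, HasDerivAt (deriv (deriv γ)) (deriv (deriv (deriv γ)) s) s := hd _ heC
  have Hn : ∀ s ∈ I, HasDerivAt n (deriv n s) s := hd _ hnC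
  -- relation R1 : ⟨σ, e⟩ = 0 on I
  have R1 : ∀ s ∈ I, mink (deriv γ s) (deriv (deriv γ) s) = 0 := by
    intro s hs
    have h := deriv_loc_const hI hs hnull (hasDerivAt_mink (Hσ s hs) (Hσ s hs))
    rw [mink_comm] at h
    linarith
  -- relation R2 : ⟨γ‴, e⟩ = 0 on I
  have R2 : ∀ s ∈ I, mink (deriv (deriv (deriv γ)) s) (deriv (deriv γ) s) = 0 := by
    intro s hs
    have h := deriv_loc_const hI hs hpa (hasDerivAt_mink (He s hs) (He s hs))
    rw [mink_comm (deriv (deriv γ) s)] at h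
    linarith
  -- relation R3 : ⟨γ‴, σ⟩ = -1 on I
  have R3 : ∀ s ∈ I, mink (deriv (deriv (deriv γ)) s) (deriv γ s) = -1 := by
    intro s hs
    have h := deriv_loc_const hI hs R1 (hasDerivAt_mink (Hσ s hs) (He s hs))
    rw [mink_comm (deriv γ s) (deriv (deriv (deriv γ)) s)] at h
    have := hpa s hs
    linarith
  -- part (a) pairings
  have Pa : ∀ s ∈ I, mink (n s) (n s) = 0 ∧ mink (n s) (deriv γ s) = -2 ∧
      mink (n s) (deriv (deriv γ) s) = 0 := by
    intro s hs
    exact ⟨NN_null _ _ (hreg s hs) (hnull s hs) (hpa s hs) (R1 s hs),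
      NN_sigma _ _ (hreg s hs) (hnull s hs) (R1 s hs),
      NN_e _ _ (hreg s hs) (hnull s hs) (hpa s hs) (R1 s hs)⟩
  -- derivative relations for n
  have R4 : ∀ s ∈ I, mink (deriv n s) (n s) = 0 := by
    intro s hs
    have h := deriv_loc_const hI hs (fun t ht => (Pa t ht).1)
      (hasDerivAt_mink (Hn s hs) (Hn s hs))
    rw [mink_comm (n s)] at h
    linarith
  have R5 : ∀ s ∈ I, mink (deriv n s) (deriv γ s) = 0 := by
    intro s hs
    have h := deriv_loc_const hI hs (fun t ht => (Pa t ht).2.1)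
      (hasDerivAt_mink (Hn s hs) (Hσ s hs))
    have h2 := (Pa s hs).2.2
    linarith
  have R6 : ∀ s ∈ I, mink (n s) (deriv (deriv (deriv γ)) s)
      = -(mink (deriv n s) (deriv (deriv γ) s)) := by
    intro s hs
    have h := deriv_loc_const hI hs (fun t ht => (Pa t ht).2.2)
      (hasDerivAt_mink (Hn s hs) (He s hs))
    linarith
  refine ⟨n, hnC, Pa, ?_, ?_, ?_⟩
  · -- uniqueness
    intro n' hP s hs
    obtain ⟨hP1, hP2, hP3⟩ := hP s hs
    have hdec := mink_decomp (deriv γ s) (deriv (deriv γ) s) (hreg s hs) (hnull s hs)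
      (hpa s hs) (R1 s hs) (n' s)
    rw [hP2, hP3] at hdec
    have key := congrArg (fun z => mink (n' s) z) hdec
    simp only [mink_add_right, mink_smul_right] at key
    rw [hP1, hP2, hP3] at key
    have hY : mink (n' s) (NN (deriv γ s) (deriv (deriv γ) s)) = 0 := by linarith
    rw [hY] at hdec
    rw [hdec]
    show _ = NN (deriv γ s) (deriv (deriv γ) s)
    module
  · -- Frenet-Serret equations
    intro s hs
    refine ⟨rfl, ?_, ?_⟩
    · have hdec := mink_decomp (deriv γ s) (deriv (deriv γ) s) (hreg s hs) (hnull s hs)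
        (hpa s hs) (R1 s hs) (deriv (deriv (deriv γ)) s)
      rw [R3 s hs, R2 s hs,
        show mink (deriv (deriv (deriv γ)) s) (NN (deriv γ s) (deriv (deriv γ) s))
          = -(mink (deriv n s) (deriv (deriv γ) s)) by
            rw [mink_comm]; exact R6 s hs] at hdec
      rw [hdec]
      show _ = _ • _ + (2⁻¹ : ℝ) • NN (deriv γ s) (deriv (deriv γ) s)
      module
    · have hdec := mink_decomp (deriv γ s) (deriv (deriv γ) s) (hreg s hs) (hnull s hs)
        (hpa s hs) (R1 s hs) (deriv n s)
      rw [R5 s hs,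
        show mink (deriv n s) (NN (deriv γ s) (deriv (deriv γ) s)) = 0 from R4 s hs] at hdec
      conv_lhs => rw [hdec]
      module
  · -- (c)
    intro s hs
    have hdec := mink_decomp (deriv γ s) (deriv (deriv γ) s) (hreg s hs) (hnull s hs)
      (hpa s hs) (R1 s hs) (deriv (deriv (deriv γ)) s)
    have key := congrArg (fun z => mink (deriv (deriv (deriv γ)) s) z) hdec
    simp only [mink_add_right, mink_smul_right] at key
    rw [R3 s hs, R2 s hs,
      show mink (deriv (deriv (deriv γ)) s) (NN (deriv γ s) (deriv (deriv γ) s))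
        = -(mink (deriv n s) (deriv (deriv γ) s)) by
          rw [mink_comm]; exact R6 s hs] at key
    linarith
end
end

section
/- Let I, J ⊆ ℝ be open intervals, let α : I → ℝ^{2,1} and β : J → ℝ^{2,1} be smooth null curves, let ρ : I × J → (0,∞) be smooth, and let N : I × J → ℝ^{2,1} be smooth such that for all (u,v) ∈ I × J: ⟨α′(u), β′(v)⟩ = 2ρ(u,v)², ⟨N, N⟩ = 1, ⟨N(u,v), α′(u)⟩ = 0, ⟨N(u,v), β′(v)⟩ = 0, α″(u) = 2(ρ_u(u,v)/ρ(u,v))·α′(u) − N(u,v), and β″(v) = 2(ρ_v(u,v)/ρ(u,v))·β′(v) − N(u,v). Then for all (u,v) ∈ I × J: ⟨α‴(u), α‴(u)⟩ = −4·ρ_uu(u,v)/ρ(u,v) and ⟨β‴(v), β‴(v)⟩ = −4·ρ_vv(u,v)/ρ(u,v); consequently ⟨α‴(u), α‴(u)⟩ − ⟨β‴(v), β‴(v)⟩ = −4·(ρ_uu(u,v) − ρ_vv(u,v))/ρ(u,v). -/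
noncomputable section

/-- Partial derivative in the first (u) variable. -/
def pdx {E : Type*} [NormedAddCommGroup E] [NormedSpace ℝ E]
    (f : ℝ × ℝ → E) (p : ℝ × ℝ) : E :=
  deriv (fun t => f (t, p.2)) p.1

/-- Partial derivative in the second (v) variable. -/
def pdy {E : Type*} [NormedAddCommGroup E] [NormedSpace ℝ E]
    (f : ℝ × ℝ → E) (p : ℝ × ℝ) : E :=
  deriv (fun t => f (p.1, t)) p.2

lemma mink_smul_sub (c : ℝ) (z x y : ℝ × ℝ × ℝ) :
    mink z (c • x - y) = c * mink z x - mink z y := by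
  simp [mink, smul_eq_mul]; ring

lemma mink_zero_right (x : ℝ × ℝ × ℝ) : mink x 0 = 0 := by simp [mink]

lemma mink_sub_smul (c : ℝ) (x y z : ℝ × ℝ × ℝ) :
    mink (x - c • y) z = mink x z - c * mink y z := by
  simp [mink, smul_eq_mul]; ring

lemma hasDerivAt_mink_s15 {F G : ℝ → ℝ × ℝ × ℝ} {F' G' : ℝ × ℝ × ℝ} {t : ℝ}
    (hF : HasDerivAt F F' t) (hG : HasDerivAt G G' t) :
    HasDerivAt (fun s => mink (F s) (G s)) (mink F' (G t) + mink (F t) G') t := by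
  have h1 : HasDerivAt (fun s => (F s).1) F'.1 t :=
    (ContinuousLinearMap.fst ℝ ℝ (ℝ × ℝ)).hasFDerivAt.comp_hasDerivAt t hF
  have h2 : HasDerivAt (fun s => (F s).2.1) F'.2.1 t :=
    (ContinuousLinearMap.fst ℝ ℝ ℝ).hasFDerivAt.comp_hasDerivAt t
      ((ContinuousLinearMap.snd ℝ ℝ (ℝ × ℝ)).hasFDerivAt.comp_hasDerivAt t hF)
  have h3 : HasDerivAt (fun s => (F s).2.2) F'.2.2 t :=
    (ContinuousLinearMap.snd ℝ ℝ ℝ).hasFDerivAt.comp_hasDerivAt t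
      ((ContinuousLinearMap.snd ℝ ℝ (ℝ × ℝ)).hasFDerivAt.comp_hasDerivAt t hF)
  have g1 : HasDerivAt (fun s => (G s).1) G'.1 t :=
    (ContinuousLinearMap.fst ℝ ℝ (ℝ × ℝ)).hasFDerivAt.comp_hasDerivAt t hG
  have g2 : HasDerivAt (fun s => (G s).2.1) G'.2.1 t :=
    (ContinuousLinearMap.fst ℝ ℝ ℝ).hasFDerivAt.comp_hasDerivAt t
      ((ContinuousLinearMap.snd ℝ ℝ (ℝ × ℝ)).hasFDerivAt.comp_hasDerivAt t hG)
  have g3 : HasDerivAt (fun s => (G s).2.2) G'.2.2 t :=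
    (ContinuousLinearMap.snd ℝ ℝ ℝ).hasFDerivAt.comp_hasDerivAt t
      ((ContinuousLinearMap.snd ℝ ℝ (ℝ × ℝ)).hasFDerivAt.comp_hasDerivAt t hG)
  have h := ((h1.mul g1).add (h2.mul g2)).sub (h3.mul g3)
  have e : mink F' (G t) + mink (F t) G'
      = F'.1 * (G t).1 + (F t).1 * G'.1 + (F'.2.1 * (G t).2.1 + (F t).2.1 * G'.2.1)
        - (F'.2.2 * (G t).2.2 + (F t).2.2 * G'.2.2) := by simp [mink]; ring
  rw [e]
  exact h

lemma mink_expand (x y z : ℝ) (p q w : ℝ × ℝ × ℝ) :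
    mink (x • p + y • q + z • w) (x • p + y • q + z • w)
      = x^2 * mink p p + y^2 * mink q q + z^2 * mink w w
        + 2*x*y * mink p q + 2*x*z * mink p w + 2*y*z * mink q w := by
  simp [mink, smul_eq_mul]
  ring

lemma mink_eq_zero_vec (a b n w : ℝ × ℝ × ℝ) (s : ℝ) (hs : s ≠ 0)
    (haa : mink a a = 0) (hbb : mink b b = 0) (hab : mink a b = s)
    (hnn : mink n n = 1) (hna : mink n a = 0) (hnb : mink n b = 0)
    (hwa : mink w a = 0) (hwb : mink w b = 0) (hwn : mink w n = 0) : w = 0 := by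
  obtain ⟨a1, a2, a0⟩ := a
  obtain ⟨b1, b2, b0⟩ := b
  obtain ⟨n1, n2, n0⟩ := n
  obtain ⟨w1, w2, w0⟩ := w
  simp only [mink] at haa hbb hab hnn hna hnb hwa hwb hwn
  set d : ℝ := a1*(b2*(-n0)-(-b0)*n2) - a2*(b1*(-n0)-(-b0)*n1) + (-a0)*(b1*n2-b2*n1) with hd
  have hgram : d^2 = -((a1*a1+a2*a2-a0*a0)*((b1*b1+b2*b2-b0*b0)*(n1*n1+n2*n2-n0*n0)
      - (n1*b1+n2*b2-n0*b0)^2)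
      - (a1*b1+a2*b2-a0*b0)*((a1*b1+a2*b2-a0*b0)*(n1*n1+n2*n2-n0*n0)
      - (n1*b1+n2*b2-n0*b0)*(n1*a1+n2*a2-n0*a0))
      + (n1*a1+n2*a2-n0*a0)*((a1*b1+a2*b2-a0*b0)*(n1*b1+n2*b2-n0*b0)
      - (b1*b1+b2*b2-b0*b0)*(n1*a1+n2*a2-n0*a0))) := by rw [hd]; ring
  rw [haa, hbb, hab, hnn, hna, hnb] at hgram
  have hd2 : d^2 = s^2 := by rw [hgram]; ring
  have hdne : d ≠ 0 := by
    intro h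
    rw [h] at hd2
    exact hs (by nlinarith [sq_nonneg s])
  have e1 : d * w1 = 0 := by
    linear_combination (b2*(-n0)-(-b0)*n2) * hwa + (-(a2*(-n0)-(-a0)*n2)) * hwb
      + (a2*(-b0)-(-a0)*b2) * hwn
  have e2 : d * w2 = 0 := by
    linear_combination (-(b1*(-n0)-(-b0)*n1)) * hwa + (a1*(-n0)-(-a0)*n1) * hwb
      + (-(a1*(-b0)-(-a0)*b1)) * hwn
  have e3 : d * w0 = 0 := by
    linear_combination (b1*n2-b2*n1) * hwa + (-(a1*n2-a2*n1)) * hwb + (a1*b2-a2*b1) * hwn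
  have z1 : w1 = 0 := by rcases mul_eq_zero.mp e1 with h | h; exact absurd h hdne; exact h
  have z2 : w2 = 0 := by rcases mul_eq_zero.mp e2 with h | h; exact absurd h hdne; exact h
  have z3 : w0 = 0 := by rcases mul_eq_zero.mp e3 with h | h; exact absurd h hdne; exact h
  simp [z1, z2, z3, Prod.ext_iff]

lemma key_lemma (I : Set ℝ) (hI : IsOpen I) (α : ℝ → ℝ × ℝ × ℝ) (r : ℝ → ℝ)
    (n : ℝ → ℝ × ℝ × ℝ) (b : ℝ × ℝ × ℝ)
    (hα : ContDiffOn ℝ (⊤ : ℕ∞) α I) (hr : ContDiffOn ℝ (⊤ : ℕ∞) r I) (hn : ContDiffOn ℝ (⊤ : ℕ∞) n I)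
    (hrpos : ∀ t ∈ I, 0 < r t)
    (hαnull : ∀ t ∈ I, mink (deriv α t) (deriv α t) = 0)
    (hbb : mink b b = 0)
    (hmetric : ∀ t ∈ I, mink (deriv α t) b = 2 * (r t) ^ 2)
    (hnn : ∀ t ∈ I, mink (n t) (n t) = 1)
    (hna : ∀ t ∈ I, mink (n t) (deriv α t) = 0)
    (hnb : ∀ t ∈ I, mink (n t) b = 0)
    (heq : ∀ t ∈ I, deriv (deriv α) t = (2 * (deriv r t / r t)) • deriv α t - n t)
    (u : ℝ) (hu : u ∈ I) :
    mink (deriv (deriv (deriv α)) u) (deriv (deriv (deriv α)) u)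
      = -4 * (deriv (deriv r) u / r u) := by
  have hmem : I ∈ nhds u := hI.mem_nhds hu
  have hrne : r u ≠ 0 := (hrpos u hu).ne'
  have hr2ne : 2 * (r u) ^ 2 ≠ 0 := by positivity
  -- differentiability facts
  have hα1 : ContDiffOn ℝ (⊤ : ℕ∞) (deriv α) I := hα.deriv_of_isOpen hI (by simp)
  have hau : HasDerivAt (deriv α) (deriv (deriv α) u) u :=
    ((hα1.differentiableOn (by simp)).differentiableAt hmem).hasDerivAt
  have hnu : HasDerivAt n (deriv n u) u :=
    ((hn.differentiableOn (by simp)).differentiableAt hmem).hasDerivAt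
  have hru : HasDerivAt r (deriv r u) u :=
    ((hr.differentiableOn (by simp)).differentiableAt hmem).hasDerivAt
  have hrru : HasDerivAt (deriv r) (deriv (deriv r) u) u :=
    (((hr.deriv_of_isOpen hI (by simp) : ContDiffOn ℝ (⊤ : ℕ∞) (deriv r) I).differentiableOn (by simp)).differentiableAt hmem).hasDerivAt
  -- notation
  set a : ℝ × ℝ × ℝ := deriv α u with ha
  set fu : ℝ := 2 * (deriv r u / r u) with hfu
  set f'u : ℝ := 2 * ((deriv (deriv r) u * r u - deriv r u * deriv r u) / (r u) ^ 2) with hf'u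
  have hf : HasDerivAt (fun t => 2 * (deriv r t / r t)) f'u u :=
    (hrru.div hru hrne).const_mul 2
  -- derivative relations for inner products with n
  have i1 : mink (deriv n u) (n u) + mink (n u) (deriv n u) = 0 := by
    have c1 := hasDerivAt_mink_s15 hnu hnu
    have c2 : HasDerivAt (fun t => mink (n t) (n t)) 0 u :=
      (hasDerivAt_const u (1:ℝ)).congr_of_eventuallyEq
        (Filter.eventuallyEq_of_mem hmem fun t ht => hnn t ht)
    exact c1.unique c2
  have i1' : mink (deriv n u) (n u) = 0 := by
    have := mink_comm (deriv n u) (n u); linarith [i1, this]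
  have i2 : mink (deriv n u) b = 0 := by
    have c1 := hasDerivAt_mink_s15 hnu (hasDerivAt_const u b)
    have c2 : HasDerivAt (fun t => mink (n t) b) 0 u :=
      (hasDerivAt_const u (0:ℝ)).congr_of_eventuallyEq
        (Filter.eventuallyEq_of_mem hmem fun t ht => hnb t ht)
    have := c1.unique c2
    rw [mink_zero_right] at this
    linarith
  have i3 : mink (deriv n u) a = 1 := by
    have c1 := hasDerivAt_mink_s15 hnu hau
    have c2 : HasDerivAt (fun t => mink (n t) (deriv α t)) 0 u :=
      (hasDerivAt_const u (0:ℝ)).congr_of_eventuallyEq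
        (Filter.eventuallyEq_of_mem hmem fun t ht => hna t ht)
    have h0 := c1.unique c2
    have h1 : mink (n u) (deriv (deriv α) u) = -1 := by
      rw [heq u hu, mink_smul_sub, hna u hu, hnn u hu]; ring
    rw [h1] at h0
    linarith
  -- N' = b / (2 r²)
  have hnderiv : deriv n u = (1 / (2 * (r u) ^ 2)) • b := by
    have hw := mink_eq_zero_vec a b (n u) (deriv n u - (1 / (2 * (r u) ^ 2)) • b)
      (2 * (r u) ^ 2) hr2ne (hαnull u hu) hbb (hmetric u hu) (hnn u hu) (hna u hu) (hnb u hu)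
      ?_ ?_ ?_
    · have := sub_eq_zero.mp hw; exact this
    · rw [mink_sub_smul, i3]
      have : mink b a = 2 * (r u) ^ 2 := by rw [mink_comm]; exact hmetric u hu
      rw [this]; field_simp; ring
    · rw [mink_sub_smul, i2, hbb]; ring
    · rw [mink_sub_smul, i1']
      have : mink b (n u) = 0 := by rw [mink_comm]; exact hnb u hu
      rw [this]; ring
  -- third derivative
  have hA : HasDerivAt (fun t => (2 * (deriv r t / r t)) • deriv α t - n t)
      ((2 * (deriv r u / r u)) • deriv (deriv α) u + f'u • deriv α u - deriv n u) u :=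
    (hf.smul hau).sub hnu
  have heva : deriv (deriv α) =ᶠ[nhds u] fun t => (2 * (deriv r t / r t)) • deriv α t - n t :=
    Filter.eventuallyEq_of_mem hmem fun t ht => heq t ht
  have h3 : HasDerivAt (deriv (deriv α))
      ((2 * (deriv r u / r u)) • deriv (deriv α) u + f'u • deriv α u - deriv n u) u :=
    hA.congr_of_eventuallyEq heva
  have hval : deriv (deriv (deriv α)) u
      = (f'u + fu^2) • a + (-fu) • n u + (-(1 / (2 * (r u) ^ 2))) • b := by
    rw [h3.deriv, heq u hu, hnderiv, ← hfu]
    module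
  rw [hval, mink_expand, hαnull u hu, hnn u hu, hbb]
  have e1 : mink a (n u) = 0 := by rw [mink_comm]; exact hna u hu
  have e2 : mink a b = 2 * (r u) ^ 2 := hmetric u hu
  have e3 : mink (n u) b = 0 := hnb u hu
  rw [e1, e2, e3, hfu, hf'u]
  field_simp
  ring
/-- The lightlike curvatures of the generating null curves of a timelike minimal surface:
⟨α‴, α‴⟩ = −4ρ_uu/ρ and ⟨β‴, β‴⟩ = −4ρ_vv/ρ. -/
theorem lightlike_curvatures_of_generating_null_curves
    (I J : Set ℝ) (hI : IsOpen I) (hJ : IsOpen J)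
    (α β : ℝ → ℝ × ℝ × ℝ) (ρ : ℝ × ℝ → ℝ) (N : ℝ × ℝ → ℝ × ℝ × ℝ)
    (hα : ContDiffOn ℝ (⊤ : ℕ∞) α I) (hβ : ContDiffOn ℝ (⊤ : ℕ∞) β J)
    (hρ : ContDiffOn ℝ (⊤ : ℕ∞) ρ (I ×ˢ J)) (hN : ContDiffOn ℝ (⊤ : ℕ∞) N (I ×ˢ J))
    (hρpos : ∀ p ∈ I ×ˢ J, 0 < ρ p)
    (hαnull : ∀ u ∈ I, mink (deriv α u) (deriv α u) = 0)
    (hβnull : ∀ v ∈ J, mink (deriv β v) (deriv β v) = 0)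
    (hmetric : ∀ u ∈ I, ∀ v ∈ J, mink (deriv α u) (deriv β v) = 2 * (ρ (u, v)) ^ 2)
    (hNN : ∀ p ∈ I ×ˢ J, mink (N p) (N p) = 1)
    (hNα : ∀ u ∈ I, ∀ v ∈ J, mink (N (u, v)) (deriv α u) = 0)
    (hNβ : ∀ u ∈ I, ∀ v ∈ J, mink (N (u, v)) (deriv β v) = 0)
    (hαeq : ∀ u ∈ I, ∀ v ∈ J,
      deriv (deriv α) u = (2 * (pdx ρ (u, v) / ρ (u, v))) • deriv α u - N (u, v))
    (hβeq : ∀ u ∈ I, ∀ v ∈ J,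
      deriv (deriv β) v = (2 * (pdy ρ (u, v) / ρ (u, v))) • deriv β v - N (u, v)) :
    ∀ u ∈ I, ∀ v ∈ J,
      mink (deriv (deriv (deriv α)) u) (deriv (deriv (deriv α)) u)
        = -4 * (pdx (pdx ρ) (u, v) / ρ (u, v)) ∧
      mink (deriv (deriv (deriv β)) v) (deriv (deriv (deriv β)) v)
        = -4 * (pdy (pdy ρ) (u, v) / ρ (u, v)) ∧
      mink (deriv (deriv (deriv α)) u) (deriv (deriv (deriv α)) u)
        - mink (deriv (deriv (deriv β)) v) (deriv (deriv (deriv β)) v)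
        = -4 * ((pdx (pdx ρ) (u, v) - pdy (pdy ρ) (u, v)) / ρ (u, v)) := by
  intro u hu v hv
  -- α part
  have hrα : ContDiffOn ℝ (⊤ : ℕ∞) (fun t => ρ (t, v)) I :=
    hρ.comp (contDiff_id.prodMk contDiff_const).contDiffOn (fun t ht => ⟨ht, hv⟩)
  have hnα : ContDiffOn ℝ (⊤ : ℕ∞) (fun t => N (t, v)) I :=
    hN.comp (contDiff_id.prodMk contDiff_const).contDiffOn (fun t ht => ⟨ht, hv⟩)
  have hAα := key_lemma I hI α (fun t => ρ (t, v)) (fun t => N (t, v)) (deriv β v)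
    hα hrα hnα (fun t ht => hρpos (t, v) ⟨ht, hv⟩) hαnull (hβnull v hv)
    (fun t ht => hmetric t ht v hv) (fun t ht => hNN (t, v) ⟨ht, hv⟩)
    (fun t ht => hNα t ht v hv) (fun t ht => hNβ t ht v hv)
    (fun t ht => hαeq t ht v hv) u hu
  -- β part
  have hrβ : ContDiffOn ℝ (⊤ : ℕ∞) (fun t => ρ (u, t)) J :=
    hρ.comp (contDiff_const.prodMk contDiff_id).contDiffOn (fun t ht => ⟨hu, ht⟩)
  have hnβ : ContDiffOn ℝ (⊤ : ℕ∞) (fun t => N (u, t)) J :=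
    hN.comp (contDiff_const.prodMk contDiff_id).contDiffOn (fun t ht => ⟨hu, ht⟩)
  have hAβ := key_lemma J hJ β (fun t => ρ (u, t)) (fun t => N (u, t)) (deriv α u)
    hβ hrβ hnβ (fun t ht => hρpos (u, t) ⟨hu, ht⟩) hβnull (hαnull u hu)
    (fun t ht => by rw [mink_comm]; exact hmetric u hu t ht)
    (fun t ht => hNN (u, t) ⟨hu, ht⟩)
    (fun t ht => hNβ u hu t ht) (fun t ht => hNα u hu t ht)
    (fun t ht => hβeq u hu t ht) v hv
  have epdx : pdx (pdx ρ) (u, v) = deriv (deriv (fun t => ρ (t, v))) u := rfl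
  have epdy : pdy (pdy ρ) (u, v) = deriv (deriv (fun t => ρ (u, t))) v := rfl
  rw [epdx, epdy]
  refine ⟨hAα, hAβ, ?_⟩
  rw [hAα, hAβ]
  ring
end
end

section
/- Let c, d ∈ ℝ, let I, J ⊆ ℝ be open intervals, and let f : I → ℝ and g : J → ℝ be smooth functions satisfying (f′)² = (c−d)f² + c, f″ = (c−d)f on I and (g′)² = (c−d)g² + d, g″ = (c−d)g on J, with f′(x) − g′(y) ≠ 0 for all (x,y) ∈ I × J. Define ρ(x,y) := (f(x)² − g(y)² + 1)/(f′(x) − g′(y)). Then ρ_xx + ρ_yy = (c − d)·ρ on I × J; equivalently, the quantity −(ρ_xx + ρ_yy)/ρ, which equals the common constant lightlike curvature of the generating null curves of the associated timelike minimal surface with planar curvature lines, is identically d − c. -/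
noncomputable section

/-- The Lorentz conformal factor ρ(x,y) = (f(x)² − g(y)² + 1)/(f′(x) − g′(y)). -/
def rhoOf (f g : ℝ → ℝ) : ℝ × ℝ → ℝ :=
  fun p => ((f p.1) ^ 2 - (g p.2) ^ 2 + 1) / (deriv f p.1 - deriv g p.2)

/-- For f, g solving the f- and g-ODE systems with f′ − g′ nowhere zero, the conformal
factor ρ = (f² − g² + 1)/(f′ − g′) satisfies ρ_xx + ρ_yy = (c − d)·ρ, i.e. the common
constant lightlike curvature −(ρ_xx + ρ_yy)/ρ of the generating null curves is d − c. -/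
theorem conformal_factor_laplace_identity
    (c d : ℝ) (I J : Set ℝ) (hI : IsOpen I) (hIc : I.OrdConnected)
    (hJ : IsOpen J) (hJc : J.OrdConnected)
    (f g : ℝ → ℝ) (hf : ContDiffOn ℝ (⊤ : ℕ∞) f I) (hg : ContDiffOn ℝ (⊤ : ℕ∞) g J)
    (hf1 : ∀ x ∈ I, (deriv f x) ^ 2 = (c - d) * (f x) ^ 2 + c)
    (hf2 : ∀ x ∈ I, deriv (deriv f) x = (c - d) * f x)
    (hg1 : ∀ y ∈ J, (deriv g y) ^ 2 = (c - d) * (g y) ^ 2 + d)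
    (hg2 : ∀ y ∈ J, deriv (deriv g) y = (c - d) * g y)
    (hne : ∀ x ∈ I, ∀ y ∈ J, deriv f x - deriv g y ≠ 0) :
    ∀ x ∈ I, ∀ y ∈ J,
      pdx (pdx (rhoOf f g)) (x, y) + pdy (pdy (rhoOf f g)) (x, y)
        = (c - d) * rhoOf f g (x, y) := by
  -- differentiability facts
  have hfd : ∀ x ∈ I, HasDerivAt f (deriv f x) x := fun x hx =>
    ((hf.differentiableOn (by simp)).differentiableAt (hI.mem_nhds hx)).hasDerivAt
  have hgd : ∀ y ∈ J, HasDerivAt g (deriv g y) y := fun y hy =>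
    ((hg.differentiableOn (by simp)).differentiableAt (hJ.mem_nhds hy)).hasDerivAt
  have hfd' : ∀ x ∈ I, HasDerivAt (deriv f) ((c - d) * f x) x := by
    intro x hx
    have h1 : DifferentiableAt ℝ (deriv f) x :=
      (((hf.deriv_of_isOpen hI (by simp) : ContDiffOn ℝ (⊤ : ℕ∞) (deriv f) I).differentiableOn (by simp)).differentiableAt
        (hI.mem_nhds hx))
    have h2 := h1.hasDerivAt
    rwa [hf2 x hx] at h2
  have hgd' : ∀ y ∈ J, HasDerivAt (deriv g) ((c - d) * g y) y := by
    intro y hy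
    have h1 : DifferentiableAt ℝ (deriv g) y :=
      (((hg.deriv_of_isOpen hJ (by simp) : ContDiffOn ℝ (⊤ : ℕ∞) (deriv g) J).differentiableOn (by simp)).differentiableAt
        (hJ.mem_nhds hy))
    have h2 := h1.hasDerivAt
    rwa [hg2 y hy] at h2
  intro x hx y hy
  -- first partials: ρ_x(x,y) = f(x), ρ_y(x,y) = g(y)
  have hrx : ∀ t ∈ I, HasDerivAt (fun s => rhoOf f g (s, y)) (f t) t := by
    intro t ht
    have hN : HasDerivAt (fun s => (f s) ^ 2 - (g y) ^ 2 + 1)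
        (2 * f t ^ 1 * deriv f t) t := (((hfd t ht).pow 2).sub_const _).add_const _
    have hD : HasDerivAt (fun s => deriv f s - deriv g y) ((c - d) * f t) t :=
      (hfd' t ht).sub_const _
    have hq := hN.div hD (hne t ht y hy)
    have : (2 * f t ^ 1 * deriv f t * (deriv f t - deriv g y) -
        ((f t) ^ 2 - (g y) ^ 2 + 1) * ((c - d) * f t)) /
        (deriv f t - deriv g y) ^ 2 = f t := by
      have hD0 := hne t ht y hy
      field_simp
      linear_combination (f t) * ((hf1 t ht) - (hg1 y hy))
    rw [this] at hq
    exact hq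
  have hry : ∀ t ∈ J, HasDerivAt (fun s => rhoOf f g (x, s)) (g t) t := by
    intro t ht
    have hN : HasDerivAt (fun s => (f x) ^ 2 - (g s) ^ 2 + 1)
        (-(2 * g t ^ 1 * deriv g t)) t := by
      have := (((hgd t ht).fun_pow 2).const_sub ((f x) ^ 2)).add_const 1
      exact this.congr_deriv (by norm_num)
    have hD : HasDerivAt (fun s => deriv f x - deriv g s) (-((c - d) * g t)) t :=
      (hgd' t ht).const_sub _
    have hq := hN.div hD (hne x hx t ht)
    have : (-(2 * g t ^ 1 * deriv g t) * (deriv f x - deriv g t) -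
        ((f x) ^ 2 - (g t) ^ 2 + 1) * -((c - d) * g t)) /
        (deriv f x - deriv g t) ^ 2 = g t := by
      have hD0 := hne x hx t ht
      field_simp
      linear_combination (g t) * ((hg1 t ht) - (hf1 x hx))
    rw [this] at hq
    exact hq
  -- second partials
  have hxx : pdx (pdx (rhoOf f g)) (x, y) = deriv f x := by
    have heq : (fun t => pdx (rhoOf f g) (t, y)) =ᶠ[nhds x] f := by
      filter_upwards [hI.mem_nhds hx] with t ht
      exact (hrx t ht).deriv
    have : pdx (pdx (rhoOf f g)) (x, y) = deriv (fun t => pdx (rhoOf f g) (t, y)) x := rfl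
    rw [this, heq.deriv_eq]
  have hyy : pdy (pdy (rhoOf f g)) (x, y) = deriv g y := by
    have heq : (fun t => pdy (rhoOf f g) (x, t)) =ᶠ[nhds y] g := by
      filter_upwards [hJ.mem_nhds hy] with t ht
      exact (hry t ht).deriv
    have : pdy (pdy (rhoOf f g)) (x, y) = deriv (fun t => pdy (rhoOf f g) (x, t)) y := rfl
    rw [this, heq.deriv_eq]
  rw [hxx, hyy]
  have hD0 := hne x hx y hy
  unfold rhoOf
  field_simp
  linear_combination (hf1 x hx) - (hg1 y hy)
end
end

section
/- Let I ⊆ ℝ be an open interval, θ : I → ℝ a smooth function with θ′ > 0 on I, and α : I → ℝ^{2,1} a smooth curve with α′(u) = (cos θ(u), sin θ(u), 1) for all u ∈ I. Let s : I → ℝ be a smooth function with s′(u) = √(θ′(u)), let J = s(I), let u : J → I be the inverse of s, and let γ := α ∘ u : J → ℝ^{2,1}. Then γ is a null curve parametrized by pseudo-arclength, and its lightlike curvature κ := ⟨γ‴, γ‴⟩ satisfies the identity 2·θ′(u)³·κ(s(u)) = 2·θ′(u)⁴ − (7/2)·θ″(u)² + 2·θ′(u)·θ‴(u) for all u ∈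 I. Consequently, κ is constant on J if and only if there exists k ∈ ℝ such that ω := θ′ satisfies the affine minimal equation 2ω⁴ + 2ω·ω″ − (7/2)·(ω′)² − k·ω³ = 0 on I. -/
noncomputable section

open Filter Topology

lemma step_lemma {E : Type*} [NormedAddCommGroup E] [NormedSpace ℝ E]
    {I : Set ℝ} (hI : IsOpen I) {θ s : ℝ → ℝ}
    (hs : ContDiffOn ℝ (⊤ : ℕ∞) s I) (hs' : ∀ t ∈ I, deriv s t = Real.sqrt (deriv θ t))
    (hθ' : ∀ t ∈ I, 0 < deriv θ t)
    (φ F F' : ℝ → E)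
    (hφ : ∀ t ∈ I, φ (s t) = F t)
    (hF : ∀ t ∈ I, HasDerivAt F (F' t) t) :
    ∀ t ∈ I, HasDerivAt φ ((Real.sqrt (deriv θ t))⁻¹ • F' t) (s t) := by
  intro t ht
  have hw := hθ' t ht
  have hqne : Real.sqrt (deriv θ t) ≠ 0 := ne_of_gt (Real.sqrt_pos.mpr hw)
  have hst : HasStrictDerivAt s (Real.sqrt (deriv θ t)) t := by
    have h := (hs.contDiffAt (hI.mem_nhds ht)).hasStrictDerivAt (by simp)
    rwa [hs' t ht] at h
  have hfd := hst.hasStrictFDerivAt_equiv hqne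
  set g : ℝ → ℝ := hfd.localInverse s _ t with hgdef
  have hg0 : g (s t) = t := hfd.localInverse_apply_image
  have hgc : ContinuousAt g (s t) := hfd.localInverse_continuousAt
  have hright : ∀ᶠ r in 𝓝 (s t), s (g r) = r := hfd.eventually_right_inverse
  have hgI : ∀ᶠ r in 𝓝 (s t), g r ∈ I := by
    have hmem : I ∈ 𝓝 (g (s t)) := by rw [hg0]; exact hI.mem_nhds ht
    exact hgc.eventually_mem hmem
  have heq : φ =ᶠ[𝓝 (s t)] F ∘ g := by
    filter_upwards [hright, hgI] with r h1 h2
    simp only [Function.comp_apply]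
    rw [← hφ _ h2, h1]
  have hgd : HasDerivAt g (Real.sqrt (deriv θ t))⁻¹ (s t) := by
    have hleft : ∀ᶠ x in 𝓝 t, g (s x) = x := hfd.eventually_left_inverse
    exact (hst.to_local_left_inverse hqne hleft).hasDerivAt
  have hFg : HasDerivAt (F ∘ g) ((Real.sqrt (deriv θ t))⁻¹ • F' t) (s t) := by
    have hF' : HasDerivAt F (F' t) (g (s t)) := by rw [hg0]; exact hF t ht
    exact HasDerivAt.scomp (s t) hF' hgd
  exact hFg.congr_of_eventuallyEq heq

def PP (θ : ℝ → ℝ) (t : ℝ) : ℝ := deriv (deriv θ) t / (2 * (deriv θ t) ^ 2)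
def QQ (θ : ℝ → ℝ) (t : ℝ) : ℝ :=
  deriv (deriv (deriv θ)) t / (2 * (deriv θ t) ^ 2) - (deriv (deriv θ) t) ^ 2 / (deriv θ t) ^ 3

def F1 (θ : ℝ → ℝ) (t : ℝ) : ℝ × ℝ × ℝ :=
  ((Real.sqrt (deriv θ t))⁻¹ * Real.cos (θ t),
   (Real.sqrt (deriv θ t))⁻¹ * Real.sin (θ t),
   (Real.sqrt (deriv θ t))⁻¹)

def G1 (θ : ℝ → ℝ) (t : ℝ) : ℝ × ℝ × ℝ :=
  (-(deriv (deriv θ) t) / (2 * deriv θ t * Real.sqrt (deriv θ t)) * Real.cos (θ t)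
      - Real.sin (θ t) * Real.sqrt (deriv θ t),
   -(deriv (deriv θ) t) / (2 * deriv θ t * Real.sqrt (deriv θ t)) * Real.sin (θ t)
      + Real.cos (θ t) * Real.sqrt (deriv θ t),
   -(deriv (deriv θ) t) / (2 * deriv θ t * Real.sqrt (deriv θ t)))

def F2 (θ : ℝ → ℝ) (t : ℝ) : ℝ × ℝ × ℝ :=
  (-(PP θ t) * Real.cos (θ t) - Real.sin (θ t),
   -(PP θ t) * Real.sin (θ t) + Real.cos (θ t),
   -(PP θ t))

def G2 (θ : ℝ → ℝ) (t : ℝ) : ℝ × ℝ × ℝ :=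
  (-(QQ θ t) * Real.cos (θ t) + PP θ t * Real.sin (θ t) * deriv θ t - Real.cos (θ t) * deriv θ t,
   -(QQ θ t) * Real.sin (θ t) - PP θ t * Real.cos (θ t) * deriv θ t - Real.sin (θ t) * deriv θ t,
   -(QQ θ t))

lemma hasDerivAt_F1 {θ : ℝ → ℝ} {t : ℝ}
    (h1 : HasDerivAt θ (deriv θ t) t)
    (h2 : HasDerivAt (deriv θ) (deriv (deriv θ) t) t)
    (hw : 0 < deriv θ t) :
    HasDerivAt (F1 θ) (G1 θ t) t := by
  have hwne : deriv θ t ≠ 0 := ne_of_gt hw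
  have hqne : Real.sqrt (deriv θ t) ≠ 0 := ne_of_gt (Real.sqrt_pos.mpr hw)
  have hq2 : Real.sqrt (deriv θ t) ^ 2 = deriv θ t := Real.sq_sqrt hw.le
  have hinv : HasDerivAt (fun t => (Real.sqrt (deriv θ t))⁻¹)
      (-(deriv (deriv θ) t) / (2 * deriv θ t * Real.sqrt (deriv θ t))) t := by
    have h := (h2.sqrt hwne).inv hqne
    refine h.congr_deriv ?_
    set q := Real.sqrt (deriv θ t) with hqdef
    rw [← hq2]
    ring
  have hc : HasDerivAt (fun t => Real.cos (θ t)) (-Real.sin (θ t) * deriv θ t) t := h1.cos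
  have hsin : HasDerivAt (fun t => Real.sin (θ t)) (Real.cos (θ t) * deriv θ t) t := h1.sin
  have hA : HasDerivAt (fun t => (Real.sqrt (deriv θ t))⁻¹ * Real.cos (θ t)) (G1 θ t).1 t := by
    have h := hinv.mul hc
    refine h.congr_deriv ?_
    simp only [G1]
    set q := Real.sqrt (deriv θ t) with hqdef
    rw [← hq2]
    field_simp
    ring
  have hB : HasDerivAt (fun t => (Real.sqrt (deriv θ t))⁻¹ * Real.sin (θ t)) (G1 θ t).2.1 t := by
    have h := hinv.mul hsin
    refine h.congr_deriv ?_
    simp only [G1]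
    set q := Real.sqrt (deriv θ t) with hqdef
    rw [← hq2]
    field_simp
  exact hA.prodMk (hB.prodMk hinv)

lemma hasDerivAt_F2 {θ : ℝ → ℝ} {t : ℝ}
    (h1 : HasDerivAt θ (deriv θ t) t)
    (h2 : HasDerivAt (deriv θ) (deriv (deriv θ) t) t)
    (h3 : HasDerivAt (deriv (deriv θ)) (deriv (deriv (deriv θ)) t) t)
    (hw : 0 < deriv θ t) :
    HasDerivAt (F2 θ) (G2 θ t) t := by
  have hwne : deriv θ t ≠ 0 := ne_of_gt hw
  have hP : HasDerivAt (PP θ) (QQ θ t) t := by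
    have hden : HasDerivAt (fun t => 2 * (deriv θ t) ^ 2) (2 * (2 * deriv θ t * deriv (deriv θ) t)) t := by
      exact ((h2.pow 2).const_mul 2).congr_deriv (by ring)
    have h := h3.div hden (by positivity)
    refine h.congr_deriv ?_
    simp only [QQ]
    field_simp
  have hc : HasDerivAt (fun t => Real.cos (θ t)) (-Real.sin (θ t) * deriv θ t) t := h1.cos
  have hsin : HasDerivAt (fun t => Real.sin (θ t)) (Real.cos (θ t) * deriv θ t) t := h1.sin
  have hA : HasDerivAt (fun t => -(PP θ t) * Real.cos (θ t) - Real.sin (θ t)) (G2 θ t).1 t := by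
    have h := (hP.neg.mul hc).sub hsin
    refine h.congr_deriv ?_
    simp only [G2, Pi.neg_apply]; ring
  have hB : HasDerivAt (fun t => -(PP θ t) * Real.sin (θ t) + Real.cos (θ t)) (G2 θ t).2.1 t := by
    have h := (hP.neg.mul hsin).add hc
    refine h.congr_deriv ?_
    simp only [G2, Pi.neg_apply]; ring
  exact hA.prodMk (hB.prodMk hP.neg)

lemma mink_F1 (θ : ℝ → ℝ) (t : ℝ) : mink (F1 θ t) (F1 θ t) = 0 := by
  simp only [mink, F1]
  linear_combination ((Real.sqrt (deriv θ t))⁻¹)^2 * Real.sin_sq_add_cos_sq (θ t)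

lemma mink_F2 (θ : ℝ → ℝ) (t : ℝ) : mink (F2 θ t) (F2 θ t) = 1 := by
  simp only [mink, F2]
  linear_combination ((PP θ t)^2 + 1) * Real.sin_sq_add_cos_sq (θ t)

lemma smul_G1_eq_F2 {θ : ℝ → ℝ} {t : ℝ} (hw : 0 < deriv θ t) :
    (Real.sqrt (deriv θ t))⁻¹ • G1 θ t = F2 θ t := by
  have hqne : Real.sqrt (deriv θ t) ≠ 0 := ne_of_gt (Real.sqrt_pos.mpr hw)
  have hq2 : Real.sqrt (deriv θ t) ^ 2 = deriv θ t := Real.sq_sqrt hw.le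
  simp only [G1, F2, PP, Prod.smul_mk, smul_eq_mul, Prod.mk.injEq]
  set q := Real.sqrt (deriv θ t) with hqdef
  clear_value q
  refine ⟨?_, ?_, ?_⟩
  · rw [← hq2]; field_simp
  · rw [← hq2]; field_simp
  · rw [← hq2]
    field_simp

lemma mink_identity {θ : ℝ → ℝ} {t : ℝ} (hw : 0 < deriv θ t) :
    2 * (deriv θ t)^3 *
      mink ((Real.sqrt (deriv θ t))⁻¹ • G2 θ t) ((Real.sqrt (deriv θ t))⁻¹ • G2 θ t)
    = 2 * (deriv θ t)^4 - 7/2 * (deriv (deriv θ) t)^2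
      + 2 * deriv θ t * deriv (deriv (deriv θ)) t := by
  have hqne : Real.sqrt (deriv θ t) ≠ 0 := ne_of_gt (Real.sqrt_pos.mpr hw)
  have hwne : deriv θ t ≠ 0 := ne_of_gt hw
  have hq2 : Real.sqrt (deriv θ t) ^ 2 = deriv θ t := Real.sq_sqrt hw.le
  have hc : Real.cos (θ t)^2 + Real.sin (θ t)^2 = 1 := Real.cos_sq_add_sin_sq (θ t)
  have e : mink ((Real.sqrt (deriv θ t))⁻¹ • G2 θ t) ((Real.sqrt (deriv θ t))⁻¹ • G2 θ t)
      = ((Real.sqrt (deriv θ t))⁻¹)^2 *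
        (((QQ θ t)^2 + (PP θ t)^2 * (deriv θ t)^2 + (deriv θ t)^2 + 2 * QQ θ t * deriv θ t) *
            (Real.cos (θ t)^2 + Real.sin (θ t)^2) - (QQ θ t)^2) := by
    simp only [mink, G2, Prod.smul_mk, smul_eq_mul]
    ring
  rw [e, hc, inv_pow, hq2]
  simp only [PP, QQ]
  field_simp
  ring

/-- Magid's generating null curves α′ = (cos θ, sin θ, 1), reparametrized by
pseudo-arclength via s′ = √(θ′): the lightlike curvature κ of γ = α ∘ u satisfies
2 θ′³ κ = 2 θ′⁴ − (7/2) θ″² + 2 θ′ θ‴, so κ is constant iff ω = θ′ satisfies the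
affine minimal equation 2ω⁴ + 2ω ω″ − (7/2)(ω′)² − k ω³ = 0 for some k ∈ ℝ. -/
theorem affine_minimal_iff_constant_lightlike_curvature
    (I : Set ℝ) (hI : IsOpen I) (hIc : I.OrdConnected) (hIne : I.Nonempty)
    (θ : ℝ → ℝ) (hθ : ContDiffOn ℝ (⊤ : ℕ∞) θ I) (hθ' : ∀ t ∈ I, 0 < deriv θ t)
    (α : ℝ → ℝ × ℝ × ℝ) (hα : ContDiffOn ℝ (⊤ : ℕ∞) α I)
    (hα' : ∀ t ∈ I, deriv α t = (Real.cos (θ t), Real.sin (θ t), (1 : ℝ)))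
    (s : ℝ → ℝ) (hs : ContDiffOn ℝ (⊤ : ℕ∞) s I)
    (hs' : ∀ t ∈ I, deriv s t = Real.sqrt (deriv θ t))
    (u : ℝ → ℝ) (hu : ∀ t ∈ I, u (s t) = t)
    (hu2 : ∀ r ∈ s '' I, s (u r) = r)
    (humem : ∀ r ∈ s '' I, u r ∈ I) :
    -- γ := α ∘ u is a null curve parametrized by pseudo-arclength
    (∀ r ∈ s '' I,
      mink (deriv (α ∘ u) r) (deriv (α ∘ u) r) = 0 ∧
      mink (deriv (deriv (α ∘ u)) r) (deriv (deriv (α ∘ u)) r) = 1) ∧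
    -- the identity 2 θ′³ κ(s(t)) = 2 θ′⁴ − (7/2) θ″² + 2 θ′ θ‴
    (∀ t ∈ I,
      2 * (deriv θ t) ^ 3 *
        mink (deriv (deriv (deriv (α ∘ u))) (s t)) (deriv (deriv (deriv (α ∘ u))) (s t))
      = 2 * (deriv θ t) ^ 4 - (7 / 2) * (deriv (deriv θ) t) ^ 2
        + 2 * deriv θ t * deriv (deriv (deriv θ)) t) ∧
    -- κ constant on J = s(I) iff ω = θ′ satisfies the affine minimal equation
    ((∃ k : ℝ, ∀ r ∈ s '' I,
        mink (deriv (deriv (deriv (α ∘ u))) r) (deriv (deriv (deriv (α ∘ u))) r) = k) ↔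
      (∃ k : ℝ, ∀ t ∈ I,
        2 * (deriv θ t) ^ 4 + 2 * deriv θ t * deriv (deriv (deriv θ)) t
          - (7 / 2) * (deriv (deriv θ) t) ^ 2 - k * (deriv θ t) ^ 3 = 0)) := by
  have hθI1 : ContDiffOn ℝ (⊤ : ℕ∞) (deriv θ) I := hθ.deriv_of_isOpen hI (by simp)
  have hθI2 : ContDiffOn ℝ (⊤ : ℕ∞) (deriv (deriv θ)) I := hθI1.deriv_of_isOpen hI (by simp)
  have hd1 : ∀ t ∈ I, HasDerivAt θ (deriv θ t) t := fun t ht =>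
    ((hθ.contDiffAt (hI.mem_nhds ht)).differentiableAt (by simp)).hasDerivAt
  have hd2 : ∀ t ∈ I, HasDerivAt (deriv θ) (deriv (deriv θ) t) t := fun t ht =>
    ((hθI1.contDiffAt (hI.mem_nhds ht)).differentiableAt (by simp)).hasDerivAt
  have hd3 : ∀ t ∈ I, HasDerivAt (deriv (deriv θ)) (deriv (deriv (deriv θ)) t) t := fun t ht =>
    ((hθI2.contDiffAt (hI.mem_nhds ht)).differentiableAt (by simp)).hasDerivAt
  have h0 : ∀ t ∈ I, (α ∘ u) (s t) = α t := fun t ht => by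
    simp only [Function.comp_apply, hu t ht]
  have hαd : ∀ t ∈ I, HasDerivAt α (Real.cos (θ t), Real.sin (θ t), (1:ℝ)) t := fun t ht => by
    have h := ((hα.contDiffAt (hI.mem_nhds ht)).differentiableAt (by simp)).hasDerivAt
    rwa [hα' t ht] at h
  have hD1' := step_lemma hI hs hs' hθ' (α ∘ u) α
    (fun t => (Real.cos (θ t), Real.sin (θ t), (1:ℝ))) h0 hαd
  have hD1 : ∀ t ∈ I, deriv (α ∘ u) (s t) = F1 θ t := fun t ht => by
    rw [(hD1' t ht).deriv]
    simp [F1, Prod.smul_mk, smul_eq_mul]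
  have hD2' := step_lemma hI hs hs' hθ' (deriv (α ∘ u)) (F1 θ) (G1 θ) hD1
    (fun t ht => hasDerivAt_F1 (hd1 t ht) (hd2 t ht) (hθ' t ht))
  have hD2 : ∀ t ∈ I, deriv (deriv (α ∘ u)) (s t) = F2 θ t := fun t ht => by
    rw [(hD2' t ht).deriv]
    exact smul_G1_eq_F2 (hθ' t ht)
  have hD3' := step_lemma hI hs hs' hθ' (deriv (deriv (α ∘ u))) (F2 θ) (G2 θ) hD2
    (fun t ht => hasDerivAt_F2 (hd1 t ht) (hd2 t ht) (hd3 t ht) (hθ' t ht))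
  have hD3 : ∀ t ∈ I, deriv (deriv (deriv (α ∘ u))) (s t)
      = (Real.sqrt (deriv θ t))⁻¹ • G2 θ t := fun t ht => (hD3' t ht).deriv
  have hmain : ∀ t ∈ I,
      2 * (deriv θ t) ^ 3 *
        mink (deriv (deriv (deriv (α ∘ u))) (s t)) (deriv (deriv (deriv (α ∘ u))) (s t))
      = 2 * (deriv θ t) ^ 4 - (7 / 2) * (deriv (deriv θ) t) ^ 2
        + 2 * deriv θ t * deriv (deriv (deriv θ)) t := fun t ht => by
    rw [hD3 t ht]
    exact mink_identity (hθ' t ht)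
  refine ⟨?_, hmain, ?_⟩
  · rintro r ⟨t, ht, rfl⟩
    rw [hD1 t ht, hD2 t ht]
    exact ⟨mink_F1 θ t, mink_F2 θ t⟩
  · constructor
    · rintro ⟨k, hk⟩
      refine ⟨2 * k, fun t ht => ?_⟩
      have h := hmain t ht
      rw [hk (s t) ⟨t, ht, rfl⟩] at h
      linear_combination -h
    · rintro ⟨k, hk⟩
      refine ⟨k / 2, ?_⟩
      rintro r ⟨t, ht, rfl⟩
      have h3 : 2 * (deriv θ t) ^ 3 *
          mink (deriv (deriv (deriv (α ∘ u))) (s t)) (deriv (deriv (deriv (α ∘ u))) (s t))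
          = k * (deriv θ t) ^ 3 := by
        linear_combination (hmain t ht) + (hk t ht)
      have hwne : (2:ℝ) * (deriv θ t) ^ 3 ≠ 0 := by
        have := hθ' t ht
        positivity
      apply mul_left_cancel₀ hwne
      rw [h3]; ring
end
end
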